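/- arXiv:1310.0742 — 4 statements merged into one kernel-verified Lean document; each statement's English description precedes it below -/
import Mathlib

section
/- Let R be a right zero semigroup with at least two elements, let S = R ∪ {1} be the monoid obtained by adjoining an identity, and for z ∈ R let σ_z = {(s,t) ∈ S×S : ∃ p, q ∈ {1,z} with ps = qt}. Then σ_z is exactly the diagonal together with the pair {1,z}, i.e., σ_z = {(s,s) : s ∈ S} ∪ {(1,z), (z,1)}; in particular each σ_z is a right congruence on S, and for z_1 ≠ z_2 in R one has σ_{z_1} ≠ σ_{z_2}. -/
/-!
For an idempotent `z`, `σ_z` is the kernel of left multiplication by `z` on `S`: multiplying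
`ps = qt` on the left by `z` absorbs `p, q ∈ {1, z}`, and conversely `p = q = z` is allowed.
A kernel is an equivalence, and `z(su) = (zs)u` makes it right compatible. In a right zero
semigroup `z` fixes every element of `R` and sends `1` to `z`, so the kernel identifies only
`1` and `z`, and `z` is recovered from `σ_z` as the element it identifies with `1`.
-/

variable {R : Type} [Semigroup R]

/-- The right congruence `σ_z` on `S = R¹ = R ∪ {1}` (`WithOne R`):
`(s,t) ∈ σ_z` iff `ps = qt` for some `p, q ∈ {1, z}`. -/
def σ (z : R) : WithOne R → WithOne R → Prop := fun s t =>
  ∃ p q : WithOne R, (p = 1 ∨ p = (z : WithOne R)) ∧ (q = 1 ∨ q = (z : WithOne R)) ∧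
    p * s = q * t

/-- The action of `S` on the quotient `S/σ_z`, given by `[s]·u = [su]`. -/
def qact (z : R) : Quot (σ z) → WithOne R → Quot (σ z) := fun a u =>
  Quot.lift (fun s => Quot.mk (σ z) (s * u))
    (fun s t h => Quot.sound (by
      obtain ⟨p, q, hp, hq, hpq⟩ := h
      exact ⟨p, q, hp, hq, by rw [← mul_assoc, hpq, mul_assoc]⟩)) a

theorem σ_mul_right {z : R} {s t : WithOne R} (h : σ z s t) (u : WithOne R) :
    σ z (s * u) (t * u) := by
  obtain ⟨p, q, hp, hq, hpq⟩ := h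
  exact ⟨p, q, hp, hq, by rw [← mul_assoc, hpq, mul_assoc]⟩

theorem σ_iff_mul_left_eq {z : R} (hz : IsIdempotentElem z) {s t : WithOne R} :
    σ z s t ↔ (z : WithOne R) * s = z * t := by
  refine ⟨fun ⟨p, q, hp, hq, hpq⟩ => ?_, fun h => ⟨z, z, Or.inr rfl, Or.inr rfl, h⟩⟩
  have absorb : ∀ p : WithOne R, (p = 1 ∨ p = (z : WithOne R)) → (z : WithOne R) * p = z := by
    rintro p (rfl | rfl)
    · exact mul_one _
    · rw [← WithOne.coe_mul, hz.eq]
  calc (z : WithOne R) * s = z * p * s := by rw [absorb p hp]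
    _ = z * q * t := by rw [mul_assoc, hpq, ← mul_assoc]
    _ = z * t := by rw [absorb q hq]

theorem σ_equivalence {z : R} (hz : IsIdempotentElem z) : Equivalence (σ z) :=
  have ker {s t : WithOne R} := σ_iff_mul_left_eq hz (s := s) (t := t)
  ⟨fun _ => ker.2 rfl, fun h => ker.2 (ker.1 h).symm,
    fun h₁ h₂ => ker.2 ((ker.1 h₁).trans (ker.1 h₂))⟩

section RightZero

variable (hR : ∀ a b : R, a * b = b)
include hR

theorem coe_mul_coe_of_rightZero (z a : R) : (z : WithOne R) * a = a := by
  rw [← WithOne.coe_mul, hR]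

theorem mul_left_eq_iff_of_rightZero (z : R) (s t : WithOne R) :
    (z : WithOne R) * s = z * t ↔
      s = t ∨ (s = 1 ∧ t = (z : WithOne R)) ∨ (s = (z : WithOne R) ∧ t = 1) := by
  induction s using WithOne.recOneCoe <;> induction t using WithOne.recOneCoe <;>
    simp [coe_mul_coe_of_rightZero hR, eq_comm]

theorem σ_injective_of_rightZero : Function.Injective (σ : R → WithOne R → WithOne R → Prop) := by
  intro z₁ z₂ h
  have h₁ : σ z₁ 1 z₁ := (σ_iff_mul_left_eq (hR z₁ z₁)).2 (by
    rw [mul_one, coe_mul_coe_of_rightZero hR])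
  rw [h, σ_iff_mul_left_eq (hR z₂ z₂), mul_one, coe_mul_coe_of_rightZero hR] at h₁
  exact WithOne.coe_inj.mp h₁.symm

end RightZero

theorem rz_sigma_description_general (hR : ∀ a b : R, a * b = b) :
    (∀ z : R, ∀ s t : WithOne R,
      σ z s t ↔ s = t ∨ (s = 1 ∧ t = (z : WithOne R)) ∨ (s = (z : WithOne R) ∧ t = 1)) ∧
    (∀ z : R, Equivalence (σ z) ∧
      ∀ s t u : WithOne R, σ z s t → σ z (s * u) (t * u)) ∧
    (∀ z₁ z₂ : R, z₁ ≠ z₂ → σ z₁ ≠ σ z₂) :=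
  ⟨fun z _ _ => (σ_iff_mul_left_eq (hR z z)).trans (mul_left_eq_iff_of_rightZero hR z _ _),
    fun z => ⟨σ_equivalence (hR z z), fun _ _ u h => σ_mul_right h u⟩,
    fun _ _ hne h => hne (σ_injective_of_rightZero hR h)⟩

/-- Let `R` be a right zero semigroup with at least two elements and `S = R¹`. Then `σ_z`
is exactly the diagonal together with the pair `{1, z}`; in particular each `σ_z` is a
right congruence on `S`, and `z₁ ≠ z₂` implies `σ_{z₁} ≠ σ_{z₂}`. -/
theorem rz_sigma_description (hR : ∀ a b : R, a * b = b) (htwo : ∃ a b : R, a ≠ b) :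
    (∀ z : R, ∀ s t : WithOne R,
      σ z s t ↔ s = t ∨ (s = 1 ∧ t = (z : WithOne R)) ∨ (s = (z : WithOne R) ∧ t = 1)) ∧
    (∀ z : R, Equivalence (σ z) ∧
      ∀ s t u : WithOne R, σ z s t → σ z (s * u) (t * u)) ∧
    (∀ z₁ z₂ : R, z₁ ≠ z₂ → σ z₁ ≠ σ z₂) :=
  rz_sigma_description_general hR
end

section
/- Let R be a right zero semigroup with at least two elements, let S = R ∪ {1} be the monoid obtained by adjoining an identity, and for z ∈ R let σ_z = {(s,t) ∈ S×S : ∃ p, q ∈ {1,z} with ps = qt}. Then for all z_1, z_2 ∈ R, the quotient right S-acts S/σ_{z_1} and S/σ_{z_2} are isomorphic. -/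
variable {R : Type} [Semigroup R]

/-- Let `R` be a right zero semigroup with at least two elements and `S = R¹`. Then for all
`z₁, z₂ ∈ R` the quotient right `S`-acts `S/σ_{z₁}` and `S/σ_{z₂}` are isomorphic: there
is a bijective `S`-map between them. -/
theorem rz_quotients_isomorphic (hR : ∀ a b : R, a * b = b) (htwo : ∃ a b : R, a ≠ b) :
    ∀ z₁ z₂ : R, ∃ f : Quot (σ z₁) → Quot (σ z₂), Function.Bijective f ∧
      ∀ (q : Quot (σ z₁)) (u : WithOne R), f (qact z₁ q u) = qact z₂ (f q) u := by
  -- right-zero law lifted to `WithOne R`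
  have hRZ : ∀ a b : R, (a : WithOne R) * (b : WithOne R) = (b : WithOne R) := by
    intro a b; rw [← WithOne.coe_mul, hR]
  -- z * p = z for p ∈ {1, z'}
  have habs : ∀ (z : R) (p : WithOne R),
      (p = 1 ∨ p = (z : WithOne R)) → (z : WithOne R) * p = (z : WithOne R) := by
    rintro z p (rfl | rfl)
    · exact mul_one _
    · exact hRZ z z
  -- the generic map [s] ↦ [z₁ * s] : Quot (σ z₁) → Quot (σ z₂), well defined
  have key : ∀ (z₁ z₂ : R) (s t : WithOne R), σ z₁ s t →
      Quot.mk (σ z₂) ((z₁ : WithOne R) * s) = Quot.mk (σ z₂) ((z₁ : WithOne R) * t) := by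
    intro z₁ z₂ s t ⟨p, q, hp, hq, hpq⟩
    have : (z₁ : WithOne R) * s = (z₁ : WithOne R) * t := by
      calc (z₁ : WithOne R) * s = (z₁ : WithOne R) * p * s := by rw [habs z₁ p hp]
        _ = (z₁ : WithOne R) * q * t := by rw [mul_assoc, hpq, ← mul_assoc]
        _ = (z₁ : WithOne R) * t := by rw [habs z₁ q hq]
    rw [this]
  -- [z * s] = [s] in Quot (σ z)
  have hcollapse : ∀ (z : R) (s : WithOne R),
      Quot.mk (σ z) ((z : WithOne R) * s) = Quot.mk (σ z) s := by
    intro z s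
    exact Quot.sound ⟨1, (z : WithOne R), Or.inl rfl, Or.inr rfl, by rw [one_mul]⟩
  intro z₁ z₂
  refine ⟨Quot.lift (fun s => Quot.mk (σ z₂) ((z₁ : WithOne R) * s)) (key z₁ z₂), ?_, ?_⟩
  · rw [Function.bijective_iff_has_inverse]
    refine ⟨Quot.lift (fun s => Quot.mk (σ z₁) ((z₂ : WithOne R) * s)) (key z₂ z₁), ?_, ?_⟩
    · intro a
      induction a using Quot.ind with
      | _ s =>
        show Quot.mk (σ z₁) ((z₂ : WithOne R) * ((z₁ : WithOne R) * s)) = Quot.mk (σ z₁) s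
        rw [← mul_assoc, hRZ z₂ z₁, hcollapse]
    · intro a
      induction a using Quot.ind with
      | _ s =>
        show Quot.mk (σ z₂) ((z₁ : WithOne R) * ((z₂ : WithOne R) * s)) = Quot.mk (σ z₂) s
        rw [← mul_assoc, hRZ z₁ z₂, hcollapse]
  · intro a u
    induction a using Quot.ind with
    | _ s =>
      show Quot.mk (σ z₂) ((z₁ : WithOne R) * (s * u))
          = Quot.mk (σ z₂) ((z₁ : WithOne R) * s * u)
      rw [mul_assoc]
end

section
/- Let R be a right zero semigroup with at least two elements, let S = R ∪ {1} be the monoid obtained by adjoining an identity, and for z ∈ R let σ_z = {(s,t) ∈ S×S : ∃ p, q ∈ {1,z} with ps = qt}. Then for every z ∈ R the quotient right S-act S/σ_z is strongly flat, i.e., it satisfies Conditions (P) and (E). -/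
variable {R : Type} [Semigroup R]

/-- Let `R` be a right zero semigroup with at least two elements and `S = R¹`. Then for
every `z ∈ R` the quotient right `S`-act `S/σ_z` is strongly flat: it satisfies
Condition (P) (whenever `x·s = y·t` there exist `w, u, v` with `x = w·u`, `y = w·v` and
`us = vt`) and Condition (E) (whenever `x·s = x·t` there exist `w, u` with `x = w·u` and
`us = ut`). -/
theorem rz_quotient_stronglyFlat (hR : ∀ a b : R, a * b = b) (htwo : ∃ a b : R, a ≠ b) :
    ∀ z : R,
      (∀ (x y : Quot (σ z)) (s t : WithOne R), qact z x s = qact z y t →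
        ∃ (w : Quot (σ z)) (u v : WithOne R),
          x = qact z w u ∧ y = qact z w v ∧ u * s = v * t) ∧
      (∀ (x : Quot (σ z)) (s t : WithOne R), qact z x s = qact z x t →
        ∃ (w : Quot (σ z)) (u : WithOne R), x = qact z w u ∧ u * s = u * t) := by
  intro z
  have zz : (z : WithOne R) * (z : WithOne R) = (z : WithOne R) := by
    rw [← WithOne.coe_mul, hR]
  have zp : ∀ p : WithOne R, (p = 1 ∨ p = (z : WithOne R)) →
      (z : WithOne R) * p = (z : WithOne R) := by
    rintro p (rfl | rfl)
    · exact mul_one _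
    · exact zz
  -- σ z a b implies z * a = z * b
  have key : ∀ a b : WithOne R, σ z a b → (z : WithOne R) * a = (z : WithOne R) * b := by
    rintro a b ⟨p, q, hp, hq, hpq⟩
    have : (z : WithOne R) * (p * a) = (z : WithOne R) * (q * b) := by rw [hpq]
    rwa [← mul_assoc, ← mul_assoc, zp p hp, zp q hq] at this
  -- equality in the quotient implies z * a = z * b
  have keyQ : ∀ a b : WithOne R, Quot.mk (σ z) a = Quot.mk (σ z) b →
      (z : WithOne R) * a = (z : WithOne R) * b := by
    intro a b h
    have h' := Quot.eqvGen_exact h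
    clear h
    induction h' with
    | rel _ _ h => exact key _ _ h
    | refl => rfl
    | symm _ _ _ ih => exact ih.symm
    | trans _ _ _ _ _ ih1 ih2 => exact ih1.trans ih2
  -- every class [x'] equals [z * x']
  have rel : ∀ x : WithOne R,
      Quot.mk (σ z) x = Quot.mk (σ z) ((z : WithOne R) * x) :=
    fun x => Quot.sound ⟨(z : WithOne R), 1, Or.inr rfl, Or.inl rfl, by rw [one_mul]⟩
  refine ⟨?_, ?_⟩
  · intro x y s t h
    obtain ⟨x', rfl⟩ := Quot.exists_rep x
    obtain ⟨y', rfl⟩ := Quot.exists_rep y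
    have hz : (z : WithOne R) * (x' * s) = (z : WithOne R) * (y' * t) := keyQ _ _ h
    refine ⟨Quot.mk (σ z) 1, (z : WithOne R) * x', (z : WithOne R) * y', ?_, ?_, ?_⟩
    · show Quot.mk (σ z) x' = Quot.mk (σ z) (1 * ((z : WithOne R) * x'))
      rw [one_mul]; exact rel x'
    · show Quot.mk (σ z) y' = Quot.mk (σ z) (1 * ((z : WithOne R) * y'))
      rw [one_mul]; exact rel y'
    · rw [mul_assoc, mul_assoc, hz]
  · intro x s t h
    obtain ⟨x', rfl⟩ := Quot.exists_rep x
    have hz : (z : WithOne R) * (x' * s) = (z : WithOne R) * (x' * t) := keyQ _ _ h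
    refine ⟨Quot.mk (σ z) 1, (z : WithOne R) * x', ?_, ?_⟩
    · show Quot.mk (σ z) x' = Quot.mk (σ z) (1 * ((z : WithOne R) * x'))
      rw [one_mul]; exact rel x'
    · rw [mul_assoc, mul_assoc, hz]
end

section
/- Let R be a right zero semigroup with at least two elements, let S = R ∪ {1} be the monoid obtained by adjoining an identity, and for z ∈ R let σ_z = {(s,t) ∈ S×S : ∃ p, q ∈ {1,z} with ps = qt}. Then for every z ∈ R, the unique S-map f : S/σ_z → Θ_S onto the one-element S-act is a coessential-cover of Θ_S; equivalently, S/σ_z has no proper subact: every element of S/σ_z generates S/σ_z as an S-act. -/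
variable {R : Type} [Semigroup R]

/-! Since every element of `R` is a right zero of `R¹`, the class `[s]·t = [t]` of `t ∈ R` is
reached from every `[s]`, and `[1]` is reached as `[s]·z = [z] = [1]`, because `1·z = z·1`.
So every element of `S/σ_z` generates it, and a nonempty subact must be everything. -/

theorem Set.eq_univ_of_closed_of_forall_exists_act {X M : Type*} (act : X → M → X)
    (hgen : ∀ x y : X, ∃ u : M, act x u = y) {B : Set X} (hB : B.Nonempty)
    (hclosed : ∀ x ∈ B, ∀ u : M, act x u ∈ B) : B = Set.univ := by
  obtain ⟨x, hx⟩ := hB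
  refine Set.eq_univ_of_forall fun y => ?_
  obtain ⟨u, rfl⟩ := hgen x y
  exact hclosed x hx u

theorem WithOne.mul_coe_of_isRightZero (hR : ∀ a b : R, a * b = b) (s : WithOne R) (t : R) :
    s * (t : WithOne R) = t := by
  induction s using WithOne.recOneCoe with
  | one => exact one_mul _
  | coe a => rw [← WithOne.coe_mul, hR a t]

theorem qact_mk (z : R) (s u : WithOne R) :
    qact z (Quot.mk (σ z) s) u = Quot.mk (σ z) (s * u) :=
  rfl

theorem quot_mk_self_eq_quot_mk_one (z : R) : Quot.mk (σ z) (z : WithOne R) = Quot.mk (σ z) 1 :=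
  Quot.sound ⟨1, (z : WithOne R), Or.inl rfl, Or.inr rfl, by rw [one_mul, mul_one]⟩

theorem qact_surjective_of_isRightZero (hR : ∀ a b : R, a * b = b) (z : R)
    (q q' : Quot (σ z)) : ∃ u : WithOne R, qact z q u = q' := by
  induction q using Quot.ind with | _ s => ?_
  induction q' using Quot.ind with | _ t => ?_
  induction t using WithOne.recOneCoe with
  | one =>
    refine ⟨(z : WithOne R), ?_⟩
    rw [qact_mk, WithOne.mul_coe_of_isRightZero hR, quot_mk_self_eq_quot_mk_one]
  | coe t => exact ⟨(t : WithOne R), by rw [qact_mk, WithOne.mul_coe_of_isRightZero hR]⟩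

theorem rz_quotient_coessential_cover_general (hR : ∀ a b : R, a * b = b) :
    ∀ z : R,
      (∀ B : Set (Quot (σ z)), B.Nonempty →
        (∀ x ∈ B, ∀ u : WithOne R, qact z x u ∈ B) → B = Set.univ) ∧
      (∀ q q' : Quot (σ z), ∃ u : WithOne R, qact z q u = q') := by
  intro z
  have hgen := qact_surjective_of_isRightZero hR z
  exact ⟨fun _ hB hclosed => Set.eq_univ_of_closed_of_forall_exists_act (qact z) hgen hB hclosed,
    hgen⟩

/-- Let `R` be a right zero semigroup with at least two elements and `S = R¹`. Then for
every `z ∈ R` the unique `S`-map `S/σ_z → Θ_S` onto the one-element `S`-act is a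
coessential-cover of `Θ_S`: no proper subact of `S/σ_z` maps onto `Θ_S`, i.e. `S/σ_z` has
no proper subact (every nonempty subset closed under the action is everything);
equivalently every element of `S/σ_z` generates `S/σ_z` as an `S`-act. -/
theorem rz_quotient_coessential_cover (hR : ∀ a b : R, a * b = b) (htwo : ∃ a b : R, a ≠ b) :
    ∀ z : R,
      (∀ B : Set (Quot (σ z)), B.Nonempty →
        (∀ x ∈ B, ∀ u : WithOne R, qact z x u ∈ B) → B = Set.univ) ∧
      (∀ q q' : Quot (σ z), ∃ u : WithOne R, qact z q u = q') :=
  rz_quotient_coessential_cover_general hR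
end
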